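/- Let k ≥ 2, let λ_1, …, λ_k ∈ ℂ with Re λ_1 < Re λ_2 < … < Re λ_k, let a_1, …, a_k be nonzero complex numbers, and set y(z) = Σ_{j=1}^k a_j e^{λ_j z}. Then the set ℝ \ G(y,0) (real numbers u at which no single term dominates) is contained in a union of at most k−1 closed intervals whose lengths sum to at most 2(k−1)·(ln 4)·Θ. -/

import Mathlib

/-!
Write `m_i(u) = |a_i| e^{u Re λ_i}` and, for `1 ≤ s < k`, call `u` balanced at `s` when the head
`Σ_{i<s} m_i(u)` and the tail `Σ_{i≥s} m_i(u)` are within a factor 3 of each other. The tail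
outgrows the head at rate at least `Re λ_s - Re λ_{s-1}`, so the points balanced at `s` fill an
interval of length at most `log 9 · Θ ≤ 2 log 4 · Θ`. At a point balanced at no `s`, let `s` be the
first split whose head exceeds three times its tail; then the last term of that head is larger
than all the other terms together.
-/

open Finset Real

def SplitBalanced (m : ℕ → ℝ) (k s : ℕ) : Prop :=
  ∑ i ∈ range s, m i ≤ 3 * ∑ i ∈ Ico s k, m i ∧ ∑ i ∈ Ico s k, m i ≤ 3 * ∑ i ∈ range s, m i

lemma sum_range_erase_eq_add_sum_Ico {M : Type*} [AddCommGroup M] (m : ℕ → M) {j k : ℕ}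
    (hj : j < k) :
    ∑ i ∈ (range k).erase j, m i = ∑ i ∈ range j, m i + ∑ i ∈ Ico (j + 1) k, m i := by
  rw [← add_left_inj (m j), sum_erase_add _ _ (mem_range.2 hj), ← sum_range_add_sum_Ico m hj.le,
    sum_eq_sum_Ico_succ_bot hj]
  abel

/- With head `F` and tail `G` around the chosen term `m j`, the two imbalances `m j + G > 3 F`
and `F + m j > 3 G` add up to `m j > F + G`; 3 is the least factor for which this works. -/
lemma exists_sum_erase_lt_of_forall_not_splitBalanced {m : ℕ → ℝ} {k : ℕ}
    (hpos : 0 < ∑ i ∈ range k, m i) (hbal : ∀ s, 0 < s → s < k → ¬ SplitBalanced m k s) :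
    ∃ j < k, ∑ i ∈ (range k).erase j, m i < m j := by
  classical
  have hk : 0 < k := Nat.pos_of_ne_zero fun h => by simp [h] at hpos
  have hlast : 3 * ∑ i ∈ Ico (k - 1 + 1) k, m i < ∑ i ∈ range (k - 1 + 1), m i := by
    rwa [Nat.sub_add_cancel hk, Ico_self, sum_empty, mul_zero]
  have hex : ∃ j, 3 * ∑ i ∈ Ico (j + 1) k, m i < ∑ i ∈ range (j + 1), m i := ⟨k - 1, hlast⟩
  set j := Nat.find hex
  have hhead : 3 * ∑ i ∈ Ico (j + 1) k, m i < ∑ i ∈ range (j + 1), m i := Nat.find_spec hex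
  have hjk : j < k := by
    have := Nat.find_min' hex hlast
    omega
  have htail : 3 * ∑ i ∈ range j, m i < ∑ i ∈ Ico j k, m i := by
    rcases Nat.eq_zero_or_pos j with hj0 | hj0
    · simpa [hj0] using hpos
    · have hprev := Nat.find_min hex (show j - 1 < j by omega)
      rw [Nat.sub_add_cancel hj0, not_lt] at hprev
      have := hbal j hj0 hjk
      rw [SplitBalanced, not_and, not_le] at this
      exact this hprev
  refine ⟨j, hjk, ?_⟩
  rw [sum_range_erase_eq_add_sum_Ico m hjk]
  rw [sum_range_succ] at hhead
  rw [sum_eq_sum_Ico_succ_bot hjk] at htail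
  linarith

section ExpSums

variable {s : Finset ℕ} {b r : ℕ → ℝ} {ρ u v : ℝ}

lemma sum_mul_exp_le_exp_mul_sum (hb : ∀ i ∈ s, 0 ≤ b i) (hr : ∀ i ∈ s, r i ≤ ρ) (huv : u ≤ v) :
    ∑ i ∈ s, b i * exp (r i * v) ≤ exp (ρ * (v - u)) * ∑ i ∈ s, b i * exp (r i * u) := by
  rw [mul_sum]
  refine sum_le_sum fun i hi => ?_
  calc b i * exp (r i * v) = exp (r i * (v - u)) * (b i * exp (r i * u)) := by
        rw [mul_left_comm, ← exp_add]; ring_nf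
    _ ≤ exp (ρ * (v - u)) * (b i * exp (r i * u)) := by
        have := hb i hi
        have := sub_nonneg.2 huv
        gcongr
        exact hr i hi

lemma exp_mul_sum_le_sum_mul_exp (hb : ∀ i ∈ s, 0 ≤ b i) (hr : ∀ i ∈ s, ρ ≤ r i) (huv : u ≤ v) :
    exp (ρ * (v - u)) * ∑ i ∈ s, b i * exp (r i * u) ≤ ∑ i ∈ s, b i * exp (r i * v) := by
  rw [mul_sum]
  refine sum_le_sum fun i hi => ?_
  calc exp (ρ * (v - u)) * (b i * exp (r i * u))
      ≤ exp (r i * (v - u)) * (b i * exp (r i * u)) := by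
        have := hb i hi
        have := sub_nonneg.2 huv
        gcongr
        exact hr i hi
    _ = b i * exp (r i * v) := by rw [mul_left_comm, ← exp_add]; ring_nf

end ExpSums

lemma exp_mul_sub_le_sq_of_le_mul {S T : Finset ℕ} {b r : ℕ → ℝ} {α β C x y : ℝ}
    (hbS : ∀ i ∈ S, 0 ≤ b i) (hbT : ∀ i ∈ T, 0 ≤ b i) (hrS : ∀ i ∈ S, r i ≤ α)
    (hrT : ∀ i ∈ T, β ≤ r i) (hC : 0 ≤ C) (hxy : x ≤ y)
    (hTx : 0 < ∑ i ∈ T, b i * exp (r i * x))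
    (hx : ∑ i ∈ S, b i * exp (r i * x) ≤ C * ∑ i ∈ T, b i * exp (r i * x))
    (hy : ∑ i ∈ T, b i * exp (r i * y) ≤ C * ∑ i ∈ S, b i * exp (r i * y)) :
    exp ((β - α) * (y - x)) ≤ C ^ 2 := by
  have key : exp (β * (y - x)) * ∑ i ∈ T, b i * exp (r i * x) ≤
      C ^ 2 * exp (α * (y - x)) * ∑ i ∈ T, b i * exp (r i * x) :=
    calc exp (β * (y - x)) * ∑ i ∈ T, b i * exp (r i * x)
        ≤ ∑ i ∈ T, b i * exp (r i * y) := exp_mul_sum_le_sum_mul_exp hbT hrT hxy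
      _ ≤ C * ∑ i ∈ S, b i * exp (r i * y) := hy
      _ ≤ C * (exp (α * (y - x)) * ∑ i ∈ S, b i * exp (r i * x)) := by
          gcongr; exact sum_mul_exp_le_exp_mul_sum hbS hrS hxy
      _ ≤ C * (exp (α * (y - x)) * (C * ∑ i ∈ T, b i * exp (r i * x))) := by gcongr
      _ = C ^ 2 * exp (α * (y - x)) * ∑ i ∈ T, b i * exp (r i * x) := by ring
  rw [sub_mul, exp_sub, div_le_iff₀ (exp_pos _)]
  exact le_of_mul_le_mul_right key hTx

lemma sub_le_of_splitBalanced {k t : ℕ} {b r : ℕ → ℝ} (hb : ∀ i < k, 0 < b i)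
    (hr : MonotoneOn r (Set.Iio k)) (ht : t + 1 < k) (hgap : r t < r (t + 1)) {x y : ℝ}
    (hxy : x ≤ y) (hx : SplitBalanced (fun i => b i * exp (r i * x)) k (t + 1))
    (hy : SplitBalanced (fun i => b i * exp (r i * y)) k (t + 1)) :
    y - x ≤ log 9 * (r (t + 1) - r t)⁻¹ := by
  have hexp := exp_mul_sub_le_sq_of_le_mul (S := range (t + 1)) (T := Ico (t + 1) k)
    (α := r t) (β := r (t + 1)) (C := 3)
    (fun i hi => (hb i (by simp at hi; omega)).le) (fun i hi => (hb i (by simp at hi; omega)).le)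
    (fun i hi => hr (by simp at hi ⊢; omega) (by simp; omega) (by simp at hi; omega))
    (fun i hi => hr (by simp; omega) (by simp at hi ⊢; omega) (by simp at hi; omega))
    (by norm_num) hxy
    (sum_pos (fun i hi => mul_pos (hb i (by simp at hi; omega)) (exp_pos _))
      ⟨t + 1, by simp; omega⟩) hx.1 hy.2
  rw [show (3 : ℝ) ^ 2 = 9 by norm_num, ← le_log_iff_exp_le (by norm_num)] at hexp
  rw [← div_eq_mul_inv, le_div_iff₀ (sub_pos.2 hgap)]
  linarith

lemma mem_Icc_csInf_of_forall_sub_le {S : Set ℝ} {D u : ℝ}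
    (hS : ∀ x ∈ S, ∀ y ∈ S, x ≤ y → y - x ≤ D) (hu : u ∈ S) :
    u ∈ Set.Icc (sInf S) (sInf S + D) := by
  have hlow : ∀ y ∈ S, u - D ≤ y := fun y hy => by
    rcases le_total y u with h | h
    · linarith [hS y hy u hu h]
    · linarith [hS u hu u hu le_rfl]
  exact ⟨csInf_le ⟨u - D, hlow⟩ hu, by linarith [le_csInf ⟨u, hu⟩ hlow]⟩

lemma exists_pos_one_add_mul_le_of_lt {S M : ℝ} (hS : 0 ≤ S) (h : S < M) :
    ∃ ε, 0 < ε ∧ (1 + ε) * S ≤ M := by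
  have hM : 0 < M := hS.trans_lt h
  refine ⟨(M - S) / M, div_pos (sub_pos.2 h) hM, ?_⟩
  have : (M - S) / M * S ≤ M - S := by
    rw [div_mul_eq_mul_div, div_le_iff₀ hM]
    nlinarith
  linarith

lemma log_nine_le_two_mul_log_four : log 9 ≤ 2 * log 4 :=
  calc log 9 ≤ log (4 ^ 2) := log_le_log (by norm_num) (by norm_num)
    _ = 2 * log 4 := by rw [log_pow]; norm_num

/-- For `y(z) = Σ_{j<k} a_j e^{λ_j z}` with simple exponents of increasing
real parts and nonzero coefficients, the set of real `u` at which no single term dominates is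
contained in a union of at most `k−1` closed intervals of total length at most
`2(k−1)(ln 4)Θ`. -/
theorem stmt_5 (k : ℕ) (hk : 2 ≤ k) (l : ℕ → ℂ)
    (hmono : ∀ j, j + 1 < k → (l j).re < (l (j + 1)).re)
    (a : ℕ → ℂ) (ha : ∀ j < k, a j ≠ 0)
    (Θ : ℝ)
    (hΘ : Θ = (Finset.range (k - 1)).sup' (Finset.nonempty_range_iff.mpr (by omega))
      fun j => ((l (j + 1)).re - (l j).re)⁻¹) :
    ∃ (N : ℕ) (c w : ℕ → ℝ), N ≤ k - 1 ∧ (∀ i, 0 ≤ w i) ∧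
      (∑ i ∈ Finset.range N, w i) ≤ 2 * ((k : ℝ) - 1) * Real.log 4 * Θ ∧
      ∀ u : ℝ,
        (¬ ∃ j < k, ∃ ε : ℝ, 0 < ε ∧
          (1 + ε) * ∑ i ∈ (Finset.range k).erase j,
              ‖a i * Complex.exp (l i * (u : ℂ))‖
            ≤ ‖a j * Complex.exp (l j * (u : ℂ))‖) →
        ∃ i < N, u ∈ Set.Icc (c i) (c i + w i) := by
  have hnorm : ∀ i (u : ℝ), ‖a i * Complex.exp (l i * u)‖ = ‖a i‖ * exp ((l i).re * u) := by
    intro i u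
    simp [Complex.norm_exp]
  have hb : ∀ i < k, 0 < ‖a i‖ := fun i hi => norm_pos_iff.2 (ha i hi)
  have hr : MonotoneOn (fun i => (l i).re) (Set.Iio k) :=
    (strictMonoOn_Iic_of_lt_succ (n := k - 1) fun j hj => hmono j (by omega)).monotoneOn.mono
      fun i hi => by simp at hi ⊢; omega
  have hgapΘ : ∀ t, t + 1 < k → ((l (t + 1)).re - (l t).re)⁻¹ ≤ Θ := fun t ht =>
    hΘ ▸ le_sup' (fun j => ((l (j + 1)).re - (l j).re)⁻¹) (mem_range.2 (by omega))
  have hΘ0 : 0 ≤ Θ := (inv_pos.2 (sub_pos.2 (hmono 0 (by omega)))).le.trans (hgapΘ 0 (by omega))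
  let B : ℕ → Set ℝ := fun t => {u | SplitBalanced (fun i => ‖a i‖ * exp ((l i).re * u)) k (t + 1)}
  refine ⟨k - 1, fun t => sInf (B t), fun _ => log 9 * Θ, le_rfl,
    fun _ => mul_nonneg (log_nonneg (by norm_num)) hΘ0, ?_, ?_⟩
  · rw [sum_const, card_range, nsmul_eq_mul, Nat.cast_sub (by omega), Nat.cast_one]
    have hk1 : (0 : ℝ) ≤ k - 1 := by
      have : (2 : ℝ) ≤ k := by exact_mod_cast hk
      linarith
    nlinarith [mul_le_mul_of_nonneg_right log_nine_le_two_mul_log_four (mul_nonneg hk1 hΘ0)]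
  · intro u hu
    by_contra hcov
    have hbal : ∀ s, 0 < s → s < k →
        ¬ SplitBalanced (fun i => ‖a i‖ * exp ((l i).re * u)) k s := by
      rintro s hs0 hsk hs
      obtain ⟨t, rfl⟩ : ∃ t, s = t + 1 := ⟨s - 1, by omega⟩
      refine hcov ⟨t, by omega, mem_Icc_csInf_of_forall_sub_le (fun x hx y hy hxy => ?_) hs⟩
      calc y - x ≤ log 9 * ((l (t + 1)).re - (l t).re)⁻¹ :=
            sub_le_of_splitBalanced hb hr hsk (hmono t hsk) hxy hx hy
        _ ≤ log 9 * Θ := by gcongr; exact hgapΘ t hsk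
    obtain ⟨j, hjk, hj⟩ := exists_sum_erase_lt_of_forall_not_splitBalanced
      (sum_pos (fun i hi => mul_pos (hb i (mem_range.1 hi)) (exp_pos _))
        (nonempty_range_iff.2 (by omega))) hbal
    refine hu ⟨j, hjk, ?_⟩
    simp only [hnorm]
    exact exists_pos_one_add_mul_le_of_lt (sum_nonneg fun _ _ => by positivity) hj
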